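/- Let {X_n, n≥1} satisfy the φ-mixing condition (1) with rate r>2 and constant C>0, and the moment condition (2) with exponent α ∈ (0,1) and ν_α = sup_n E|X_n|^{1+α}. Let 0 ≤ α' ≤ α, γ = (αr+α')/((1+α)(1+r)), δ ∈ (0,1), p = 2 log(1/δ), λ = (r−1)/((1+r)(1+α)), b_n = (n/p)^λ, and Z_k = X_k·1(|X_k|>b_n) − E(X_k·1(|X_k|>b_n)). Let a_2 = 2(c_α ν_α)^{1/(1+α)}, where c_α is a positive constant (independent of n and b) such that E|Σ_{k=1}^n Z_k(b)|^{1+α} ≤ 2^{1+α} c_α ν_α n for all n≥1 and b>0. Then for every n with p/n < 1, P( |n^{-1} Σ_{k=1}^n Z_k| ≥ a_2 (p/n)^γ ) ≤ p^{-α} (p/n)^{(α−α')/(1+r)}. -/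

import Mathlib

open MeasureTheory ProbabilityTheory Finset

noncomputable def phiCoef {Ω : Type*} [MeasurableSpace Ω] (μ : Measure Ω)
    (X : ℕ → Ω → ℝ) (m : ℕ) : ℝ :=
  sSup {x : ℝ | ∃ k : ℕ, 1 ≤ k ∧ ∃ A B : Set Ω,
    MeasurableSet[⨆ i ∈ Set.Icc 1 k, MeasurableSpace.comap (X i) inferInstance] A ∧
    MeasurableSet[⨆ i ∈ Set.Ici (k + m), MeasurableSpace.comap (X i) inferInstance] B ∧
    0 < μ A ∧
    x = |(μ (B ∩ A)).toReal / (μ A).toReal - (μ B).toReal|}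

noncomputable def phiSum {Ω : Type*} [MeasurableSpace Ω] (μ : Measure Ω)
    (X : ℕ → Ω → ℝ) : ℝ :=
  ∑' m : ℕ, Real.sqrt (phiCoef μ X (m + 1))

noncomputable def tailPart {Ω : Type*} [MeasurableSpace Ω] (μ : Measure Ω)
    (X : ℕ → Ω → ℝ) (b : ℝ) (k : ℕ) (ω : Ω) : ℝ :=
  (if b < |X k ω| then X k ω else 0) - ∫ ω', (if b < |X k ω'| then X k ω' else 0) ∂μ

noncomputable def mainPart {Ω : Type*} [MeasurableSpace Ω] (μ : Measure Ω)
    (X : ℕ → Ω → ℝ) (b : ℝ) (k : ℕ) (ω : Ω) : ℝ :=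
  (if |X k ω| ≤ b then X k ω else 0) - ∫ ω', (if |X k ω'| ≤ b then X k ω' else 0) ∂μ

/-!
Markov's inequality for the `(1 + α)`-th power: the event says `|∑_{k ≤ n} Z_k| ≥ n a₂ (p/n)^γ`,
the moment bound reads `E|∑ Z_k|^{1+α} ≤ a₂^{1+α} n`, and since `γ (1 + α) = α - (α - α')/(1 + r)`
the quotient `a₂^{1+α} n / (n a₂ (p/n)^γ)^{1+α}` is exactly `p^{-α} (p/n)^{(α-α')/(1+r)}`.
-/

section Markov

variable {Ω : Type*} [MeasurableSpace Ω] {μ : Measure Ω}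

lemma measureReal_le_integral_abs_rpow_div {f : Ω → ℝ} {q c : ℝ} (hq : 0 < q) (hc : 0 < c)
    (hf : Integrable (fun ω => |f ω| ^ q) μ) :
    μ.real {ω | c ≤ |f ω|} ≤ (∫ ω, |f ω| ^ q ∂μ) / c ^ q := by
  have hset : {ω | c ≤ |f ω|} = {ω | c ^ q ≤ |f ω| ^ q} := by
    ext ω
    exact (Real.rpow_le_rpow_iff hc.le (abs_nonneg _) hq).symm
  rw [hset, le_div_iff₀' (by positivity)]
  exact mul_meas_ge_le_integral_of_nonneg (ae_of_all _ fun ω => by positivity) hf _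

lemma measureReal_le_abs_average_rpow_div {f : Ω → ℝ} {q n t : ℝ} (hq : 0 < q) (hn : 0 < n)
    (ht : 0 < t) (hf : Integrable (fun ω => |f ω| ^ q) μ) :
    μ.real {ω | t ≤ |(1 / n) * f ω|} ≤ (∫ ω, |f ω| ^ q ∂μ) / (n * t) ^ q := by
  have hset : {ω | t ≤ |(1 / n) * f ω|} = {ω | n * t ≤ |f ω|} := by
    ext ω
    rw [Set.mem_ofPred_eq, Set.mem_ofPred_eq, abs_mul, abs_of_pos (one_div_pos.2 hn),
      one_div_mul_eq_div, le_div_iff₀' hn]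
  rw [hset]
  exact measureReal_le_integral_abs_rpow_div hq (by positivity) hf

end Markov

section TailPart

variable {Ω : Type*} [MeasurableSpace Ω] {μ : Measure Ω} [IsFiniteMeasure μ] {X : ℕ → Ω → ℝ}

lemma memLp_tailPart {p : ENNReal} {k : ℕ} (hmeas : Measurable (X k)) (hX : MemLp (X k) p μ)
    (b : ℝ) : MemLp (tailPart μ X b k) p μ := by
  refine (hX.of_le ?_ (ae_of_all _ fun ω => ?_)).sub (memLp_const _)
  · exact (Measurable.ite (measurableSet_lt measurable_const hmeas.abs) hmeas
      measurable_const).aestronglyMeasurable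
  · split_ifs <;> simp

lemma integrable_abs_sum_tailPart_rpow {q : ℝ} (hq : 0 < q) (s : Finset ℕ)
    (hmeas : ∀ k ∈ s, Measurable (X k)) (hint : ∀ k ∈ s, Integrable (fun ω => |X k ω| ^ q) μ)
    (b : ℝ) : Integrable (fun ω => |∑ k ∈ s, tailPart μ X b k ω| ^ q) μ := by
  have hLp : ∀ k ∈ s, MemLp (X k) (ENNReal.ofReal q) μ := fun k hk => by
    rw [← integrable_norm_rpow_iff (hmeas k hk).aestronglyMeasurable (by simpa using hq)
      ENNReal.ofReal_ne_top, ENNReal.toReal_ofReal hq.le]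
    simpa using hint k hk
  simpa [ENNReal.toReal_ofReal hq.le] using
    (memLp_finsetSum s fun k hk => memLp_tailPart (hmeas k hk) (hLp k hk) b).integrable_norm_rpow'

end TailPart

lemma mul_div_rpow_eq {K n p γ s : ℝ} (hK : 0 < K) (hn : 0 < n) (hp : 0 < p) (hs : s ≠ 0) :
    K * n / (n * (K ^ (1 / s) * (p / n) ^ γ)) ^ s = p ^ (1 - s) * (p / n) ^ (s - 1 - γ * s) := by
  obtain ⟨q, hq, rfl⟩ : ∃ q, 0 < q ∧ p = q * n := ⟨p / n, div_pos hp hn, by field_simp⟩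
  rw [mul_div_cancel_right₀ q hn.ne', Real.mul_rpow hn.le (by positivity),
    Real.mul_rpow (by positivity) (by positivity), ← Real.rpow_mul hK.le, one_div_mul_cancel hs,
    Real.rpow_one, ← Real.rpow_mul hq.le, Real.mul_rpow hq.le hn.le, Real.rpow_sub hq,
    Real.rpow_sub hq, Real.rpow_sub hn, Real.rpow_sub hq, Real.rpow_one, Real.rpow_one]
  field_simp

theorem tail_average_probability_bound_general
    {Ω : Type*} [MeasurableSpace Ω] (μ : Measure Ω) [IsProbabilityMeasure μ]
    (X : ℕ → Ω → ℝ) (hmeas : ∀ n, Measurable (X n))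
    (r : ℝ) (hr : 2 < r)
    (α να : ℝ) (hα0 : 0 < α)
    (hint : ∀ n : ℕ, 1 ≤ n → Integrable (fun ω => |X n ω| ^ (1 + α)) μ)
    (hνpos : 0 < να)
    (α' : ℝ)
    (cα : ℝ) (hcα : 0 < cα)
    (hcαineq : ∀ n : ℕ, 1 ≤ n → ∀ b : ℝ, 0 < b →
      ∫ ω, |∑ k ∈ Finset.Icc 1 n, tailPart μ X b k ω| ^ (1 + α) ∂μ ≤
        2 ^ (1 + α) * cα * να * n)
    (γ δ p lam a₂ : ℝ)
    (hγ : γ = (α * r + α') / ((1 + α) * (1 + r)))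
    (hδ : δ ∈ Set.Ioo (0:ℝ) 1)
    (hp : p = 2 * Real.log (1/δ))
    (ha₂ : a₂ = 2 * (cα * να) ^ (1 / (1 + α))) :
    ∀ n : ℕ, 1 ≤ n → p / n < 1 →
      (μ {ω | a₂ * (p / n) ^ γ ≤
          |(1 / (n:ℝ)) * ∑ k ∈ Finset.Icc 1 n, tailPart μ X (((n:ℝ) / p) ^ lam) k ω|}).toReal ≤
        p ^ (-α) * (p / n) ^ ((α - α') / (1 + r)) := by
  intro n hn _
  have hs : (0 : ℝ) < 1 + α := by linarith
  have hn0 : (0 : ℝ) < n := by exact_mod_cast hn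
  have hp0 : 0 < p := by
    rw [hp, one_div, Real.log_inv]
    linarith [Real.log_neg hδ.1 hδ.2]
  have hK : 0 < 2 ^ (1 + α) * cα * να := by positivity
  have ha₂0 : 0 < a₂ := by rw [ha₂]; positivity
  have ha₂K : a₂ = (2 ^ (1 + α) * cα * να) ^ (1 / (1 + α)) := by
    rw [ha₂, mul_assoc (2 ^ (1 + α)), Real.mul_rpow (x := 2 ^ (1 + α)) (by positivity)
      (by positivity), ← Real.rpow_mul zero_le_two, mul_one_div_cancel hs.ne', Real.rpow_one]
  have hexp : 1 + α - 1 - γ * (1 + α) = (α - α') / (1 + r) := by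
    have hr1 : 1 + r ≠ 0 := ne_of_gt (by linarith)
    rw [hγ]
    field_simp
    ring
  calc μ.real _
      ≤ (∫ ω, |∑ k ∈ Icc 1 n, tailPart μ X ((n / p) ^ lam) k ω| ^ (1 + α) ∂μ) /
          (n * (a₂ * (p / n) ^ γ)) ^ (1 + α) :=
        measureReal_le_abs_average_rpow_div hs hn0 (by positivity)
          (integrable_abs_sum_tailPart_rpow hs _ (fun k _ => hmeas k)
            (fun k hk => hint k (mem_Icc.1 hk).1) _)
    _ ≤ 2 ^ (1 + α) * cα * να * n / (n * (a₂ * (p / n) ^ γ)) ^ (1 + α) := by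
        gcongr
        exact hcαineq n hn _ (by positivity)
    _ = p ^ (-α) * (p / n) ^ ((α - α') / (1 + r)) := by
        rw [ha₂K, mul_div_rpow_eq hK hn0 hp0 hs.ne', hexp, sub_add_cancel_left]

/-- inequality (10) in the proof of Theorem 1: the average of the tail parts
`Z_k = X_k·1(|X_k| > b_n) - E(X_k·1(|X_k| > b_n))` with truncation level `b_n = (n/p)^λ`,
`λ = (r-1)/((1+r)(1+α))`, satisfies
`P(|n⁻¹ ∑_{k=1}^n Z_k| ≥ a₂ (p/n)^γ) ≤ p^{-α} (p/n)^{(α-α')/(1+r)}`. -/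
theorem tail_average_probability_bound
    {Ω : Type*} [MeasurableSpace Ω] (μ : Measure Ω) [IsProbabilityMeasure μ]
    (X : ℕ → Ω → ℝ) (hmeas : ∀ n, Measurable (X n))
    (r C : ℝ) (hr : 2 < r) (hC : 0 < C)
    (hmix : ∀ m : ℕ, 1 ≤ m → phiCoef μ X m ≤ C * ((m : ℝ) + 1) ^ (-r))
    (α να : ℝ) (hα0 : 0 < α) (hα1 : α < 1)
    (hint : ∀ n : ℕ, 1 ≤ n → Integrable (fun ω => |X n ω| ^ (1 + α)) μ)
    (hbdd : BddAbove (Set.range fun n : ℕ => ∫ ω, |X (n + 1) ω| ^ (1 + α) ∂μ))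
    (hνα : να = ⨆ n : ℕ, ∫ ω, |X (n + 1) ω| ^ (1 + α) ∂μ) (hνpos : 0 < να)
    (α' : ℝ) (hα'0 : 0 ≤ α') (hα'α : α' ≤ α)
    (cα : ℝ) (hcα : 0 < cα)
    (hcαineq : ∀ n : ℕ, 1 ≤ n → ∀ b : ℝ, 0 < b →
      ∫ ω, |∑ k ∈ Finset.Icc 1 n, tailPart μ X b k ω| ^ (1 + α) ∂μ ≤
        2 ^ (1 + α) * cα * να * n)
    (γ δ p lam a₂ : ℝ)
    (hγ : γ = (α * r + α') / ((1 + α) * (1 + r)))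
    (hδ : δ ∈ Set.Ioo (0:ℝ) 1)
    (hp : p = 2 * Real.log (1/δ))
    (hlam : lam = (r - 1) / ((1 + r) * (1 + α)))
    (ha₂ : a₂ = 2 * (cα * να) ^ (1 / (1 + α))) :
    ∀ n : ℕ, 1 ≤ n → p / n < 1 →
      (μ {ω | a₂ * (p / n) ^ γ ≤
          |(1 / (n:ℝ)) * ∑ k ∈ Finset.Icc 1 n, tailPart μ X (((n:ℝ) / p) ^ lam) k ω|}).toReal ≤
        p ^ (-α) * (p / n) ^ ((α - α') / (1 + r)) :=
  tail_average_probability_bound_general μ X hmeas r hr α να hα0 hint hνpos α' cα hcα hcαineq γ δ p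
    lam a₂ hγ hδ hp ha₂
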